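/- arXiv:1604.04766 — 2 statements merged into one kernel-verified Lean document; each statement's English description precedes it below -/
import Mathlib

section
/- For every n ≥ 1, Σ_{π ∈ Sₙ} pexc(π) = n! · (n + Hₙ − 4 + 2/n), where Hₙ = Σ_{k=1}^{n} 1/k; equivalently, the mean prefix exchange distance of a uniform random permutation of Sₙ is n + Hₙ − 4 + 2/n. -/
open Equiv Finset Filter
open scoped Classical

noncomputable section

/-- Number of fixed points of a permutation. -/
def c1 {n : ℕ} (π : Equiv.Perm (Fin n)) : ℕ :=
  (Finset.univ.filter fun i => π i = i).card

/-- Number of cycles of length at least 2 of a permutation. -/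
def c2 {n : ℕ} (π : Equiv.Perm (Fin n)) : ℕ := π.cycleType.card

/-- The prefix exchange distance, given by the Akers–Krishnamurthy formula. -/
def pexc {n : ℕ} (π : Equiv.Perm (Fin n)) : ℕ :=
  n + c2 π - c1 π - (if ∀ i : Fin n, (i : ℕ) = 0 → π i = i then 0 else 2)

/-- Whitney numbers of the second kind for the star poset. -/
def W (n k : ℕ) : ℕ :=
  (Finset.univ.filter fun π : Equiv.Perm (Fin n) => pexc π = k).card

/-- The `n`-th harmonic number. -/
def H (n : ℕ) : ℝ := ∑ k ∈ Finset.Icc 1 n, (1 : ℝ) / k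

/-! Summing the Akers–Krishnamurthy formula term by term, once it is cast to `ℝ` without
truncation (a permutation moving `0` has at least two non-fixed points):
* double counting pairs `(π, a)` with `π a = a` gives `∑ c₁ = n · (n - 1)! = n!`;
* double counting pairs `(π, c)` with `c` a cycle factor of `π`: a `k`-cycle is a factor of
  exactly `(n - k)!` permutations, and there are `(k - 1)! · (n choose k)` of them, so
  `∑ c₂ = ∑_{k=2}^n n!/k = n! (Hₙ - 1)`;
* `π 0 ≠ 0` holds for `n! - (n - 1)!` permutations. -/

open Nat

namespace Equiv.Perm

variable {α : Type*} [Fintype α] [DecidableEq α]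

theorem card_filter_forall_mem_apply_eq_self (s : Finset α) :
    #{σ : Perm α | ∀ a ∈ s, σ a = a} = (Fintype.card α - #s)! := by
  rw [← Fintype.card_subtype, ← card_compl, ← Fintype.card_coe sᶜ, ← Fintype.card_perm]
  refine Fintype.card_congr ((Equiv.subtypeEquivRight fun σ => ?_).trans
    (Perm.subtypeEquivSubtypePerm (· ∈ sᶜ)).symm)
  simp

theorem card_filter_apply_eq_self (a : α) :
    #{σ : Perm α | σ a = a} = (Fintype.card α - 1)! := by
  simpa using card_filter_forall_mem_apply_eq_self {a}

theorem card_filter_apply_ne_self (a : α) :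
    #{σ : Perm α | σ a ≠ a} = (Fintype.card α)! - (Fintype.card α - 1)! := by
  rw [filter_not, card_sdiff_of_subset (filter_subset _ _), card_filter_apply_eq_self,
    Finset.card_univ, Fintype.card_perm]

theorem card_filter_forall_mem_support_apply_eq (c : Perm α) :
    #{π : Perm α | ∀ a ∈ c.support, π a = c a} = (Fintype.card α - #c.support)! := by
  rw [← card_filter_forall_mem_apply_eq_self, ← Fintype.card_subtype, ← Fintype.card_subtype]
  exact Fintype.card_congr <| (Equiv.mulLeft c⁻¹).subtypeEquiv fun π =>
    forall₂_congr fun a _ => by rw [coe_mulLeft, Perm.mul_apply, Perm.inv_eq_iff_eq, eq_comm]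

theorem card_filter_mem_cycleFactorsFinset {c : Perm α} (hc : c.IsCycle) :
    #{π : Perm α | c ∈ π.cycleFactorsFinset} = (Fintype.card α - #c.support)! := by
  simp_rw [mem_cycleFactorsFinset_iff, hc, true_and, eq_comm (a := c _)]
  exact card_filter_forall_mem_support_apply_eq c

theorem cycleType_eq_singleton_iff {σ : Perm α} {k : ℕ} :
    σ.cycleType = {k} ↔ σ.IsCycle ∧ #σ.support = k := by
  refine ⟨fun h => ?_, fun ⟨hσ, hk⟩ => hk ▸ hσ.cycleType⟩
  have hσ : σ.IsCycle := card_cycleType_eq_one.mp (by simp [h])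
  exact ⟨hσ, by simpa [hσ.cycleType] using h⟩

theorem sum_card_fixedPoints :
    ∑ π : Perm α, #{a | π a = a} = Fintype.card α * (Fintype.card α - 1)! := by
  have := sum_card_bipartiteAbove_eq_sum_card_bipartiteBelow
    (fun (π : Perm α) a => π a = a) (s := univ) (t := univ)
  simp only [bipartiteAbove, bipartiteBelow, card_filter_apply_eq_self] at this
  rw [this, sum_const, Finset.card_univ, smul_eq_mul]

theorem sum_card_cycleFactorsFinset_eq_sum_factorial :
    ∑ π : Perm α, #π.cycleFactorsFinset =
      ∑ c ∈ {c : Perm α | c.IsCycle}, (Fintype.card α - #c.support)! := by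
  have hcycles (π : Perm α) :
      ({c ∈ {c | c.IsCycle} | c ∈ π.cycleFactorsFinset} : Finset (Perm α)) =
        π.cycleFactorsFinset := by
    ext c
    simp only [mem_filter, mem_univ, true_and, and_iff_right_iff_imp]
    exact fun h => (mem_cycleFactorsFinset_iff.mp h).1
  have := sum_card_bipartiteAbove_eq_sum_card_bipartiteBelow
    (fun (π c : Perm α) => c ∈ π.cycleFactorsFinset) (s := univ) (t := {c | c.IsCycle})
  simp only [bipartiteAbove, bipartiteBelow, hcycles] at this
  rw [this]
  refine sum_congr rfl fun c hc => ?_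
  rw [card_filter_mem_cycleFactorsFinset (by simpa using hc)]

theorem card_cycleType_singleton_mul_factorial_mul {k : ℕ} (hk : 2 ≤ k)
    (hkα : k ≤ Fintype.card α) :
    #{g : Perm α | g.cycleType = {k}} * (Fintype.card α - k)! * k = (Fintype.card α)! := by
  rw [card_of_cycleType_singleton hk hkα, ← Nat.choose_mul_factorial_mul_factorial hkα,
    ← Nat.mul_factorial_pred (by omega : k ≠ 0)]
  ring

theorem sum_card_cycleFactorsFinset_eq_factorial_mul_sum :
    (∑ π : Perm α, #π.cycleFactorsFinset : ℝ) =
      (Fintype.card α)! * ∑ k ∈ Icc 2 (Fintype.card α), (1 : ℝ) / k := by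
  have hsupp (c : Perm α) (hc : c ∈ ({c | c.IsCycle} : Finset (Perm α))) :
      #c.support ∈ Icc 2 (Fintype.card α) :=
    mem_Icc.mpr ⟨(mem_filter.mp hc).2.two_le_card_support, card_le_univ _⟩
  rw_mod_cast [sum_card_cycleFactorsFinset_eq_sum_factorial, ← sum_fiberwise_of_maps_to hsupp]
  push_cast
  rw [mul_sum]
  refine sum_congr rfl fun k hk => ?_
  obtain ⟨hk2, hkα⟩ := mem_Icc.mp hk
  have hfiber : ({c ∈ {c | c.IsCycle} | #c.support = k} : Finset (Perm α)) =
      ({g | g.cycleType = {k}} : Finset (Perm α)) := by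
    simp only [filter_filter, cycleType_eq_singleton_iff]
  have hcount := card_cycleType_singleton_mul_factorial_mul hk2 hkα
  rw [sum_congr rfl fun c hc => by rw [(mem_filter.mp hc).2], sum_const, nsmul_eq_mul, hfiber,
    ← hcount]
  push_cast
  field_simp

end Equiv.Perm

open Equiv.Perm

theorem c2_eq_card_cycleFactorsFinset {n : ℕ} (π : Perm (Fin n)) :
    c2 π = #π.cycleFactorsFinset := by
  rw [c2, cycleType_def, Multiset.card_map]
  rfl

theorem c1_add_card_support {n : ℕ} (π : Perm (Fin n)) : c1 π + #π.support = n := by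
  have := card_filter_add_card_filter_not (s := univ) (fun i => π i = i)
  rwa [Finset.card_fin] at this

theorem pexc_cast {n : ℕ} (hn : 0 < n) (π : Perm (Fin n)) :
    (pexc π : ℝ) = n + c2 π - c1 π - if π ⟨0, hn⟩ = ⟨0, hn⟩ then 0 else 2 := by
  have hfix : (∀ i : Fin n, (i : ℕ) = 0 → π i = i) ↔ π ⟨0, hn⟩ = ⟨0, hn⟩ :=
    ⟨fun h => h _ rfl, fun h i hi => (Fin.ext hi : i = ⟨0, hn⟩) ▸ h⟩
  have hsum := c1_add_card_support π
  rw [pexc, if_congr hfix rfl rfl]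
  split_ifs with h
  · rw [Nat.sub_zero, Nat.cast_sub (by omega)]
    push_cast
    ring
  · have : 2 ≤ #π.support := two_le_card_support_of_ne_one (by rintro rfl; exact h rfl)
    rw [Nat.cast_sub (by omega), Nat.cast_sub (by omega)]
    push_cast
    ring

theorem H_eq_one_add {n : ℕ} (hn : 1 ≤ n) : H n = 1 + ∑ k ∈ Icc 2 n, (1 : ℝ) / k := by
  rw [H, ← insert_Icc_add_one_left_eq_Icc hn, sum_insert (by simp)]
  norm_num

theorem stmt11 (n : ℕ) (hn : 1 ≤ n) :
    ∑ π : Equiv.Perm (Fin n), (pexc π : ℝ) =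
      (Nat.factorial n : ℝ) * ((n : ℝ) + H n - 4 + 2 / n) := by
  have hc1 : ∑ π : Perm (Fin n), (c1 π : ℝ) = n ! := by
    rw_mod_cast [← Nat.mul_factorial_pred (by omega : n ≠ 0)]
    simpa only [c1, Fintype.card_fin] using sum_card_fixedPoints (α := Fin n)
  have hc2 : ∑ π : Perm (Fin n), (c2 π : ℝ) = n ! * (H n - 1) := by
    simpa [c2_eq_card_cycleFactorsFinset, H_eq_one_add hn] using
      sum_card_cycleFactorsFinset_eq_factorial_mul_sum (α := Fin n)
  have hmoved : ∑ π : Perm (Fin n), (if π ⟨0, hn⟩ = ⟨0, hn⟩ then 0 else 2 : ℝ) =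
      2 * ((n ! : ℝ) - (n - 1)!) := by
    rw [sum_ite, sum_const_zero, zero_add, sum_const, nsmul_eq_mul, card_filter_apply_ne_self,
      Fintype.card_fin, Nat.cast_sub (Nat.factorial_le (by omega)), mul_comm]
  have hfact : ((n - 1)! : ℝ) = n ! / n := by
    rw [eq_div_iff (by positivity), ← Nat.cast_mul, mul_comm, Nat.mul_factorial_pred (by omega)]
  simp only [pexc_cast hn, sum_sub_distrib, sum_add_distrib, sum_const, Finset.card_univ,
    Fintype.card_perm, Fintype.card_fin, nsmul_eq_mul, hc1, hc2, hmoved, hfact]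
  field_simp
  ring
end
end

section
/- For n ≥ 1 and k ≥ 1, the map π ↦ reduce((π∘(1,i)) with the fixed point i removed) gives, for each fixed i with 2 ≤ i ≤ n, a bijection between {π ∈ Sₙ : pexc(π) = k, π(1) = i} and {τ ∈ S_{n−1} : pexc(τ) = k−1}. -/
open Equiv Finset Filter
open scoped Classical

noncomputable section

/-- Remove the fixed point `i` from a permutation fixing `i`, relabeling the
remaining elements order-preservingly. (For permutations not fixing `i`, the
permutation is first composed with a swap making `i` a fixed point.) -/
def removeFix {m : ℕ} (i : Fin (m + 1)) (σ : Equiv.Perm (Fin (m + 1))) :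
    Equiv.Perm (Fin m) :=
  (finSuccAboveEquiv i).symm.permCongr
    ((Equiv.swap i (σ i) * σ).subtypePerm (p := fun x => x ≠ i) (by
      have hfix : (Equiv.swap i (σ i) * σ) i = i := by
        simp [Equiv.Perm.mul_apply]
      intro x
      constructor
      · intro hx hc
        exact hx (by rw [hc, hfix])
      · intro hx hc
        exact hx ((Equiv.swap i (σ i) * σ).injective (hc.trans hfix.symm))))

/-!
Write `i = π 0` and `σ = π * swap 0 i`. Then `σ = swap i (π i) * π`, which cuts `i` out of its
cycle, and `σ i = i`. Since `pexc π = #supp π + c₂ π - 2·[π 0 ≠ 0]`, there are two cases: if the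
cycle of `0` is the transposition `(0 i)`, then `σ` loses two points of support and one cycle
and fixes `0`; otherwise it loses only the point `i`, keeps its cycles and still moves `0`.
Either way `pexc σ = pexc π - 1`. Deleting the fixed point `i ≠ 0` preserves the support, the
cycle type and whether `0` is fixed, hence `pexc`; the inverse map reinserts `i` as a fixed
point and multiplies by `swap 0 i` again.
-/

namespace Equiv.Perm

variable {α : Type*} {f : Perm α} {x : α}

theorem mul_inv_cycleOf_apply_of_sameCycle [DecidableRel f.SameCycle] {y : α}
    (hy : f.SameCycle x y) : (f * (f.cycleOf x)⁻¹) y = y := by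
  rw [mul_apply, cycleOf_inv, (sameCycle_inv.2 hy).cycleOf_apply]
  exact f.apply_symm_apply y

variable [DecidableEq α]

theorem swap_mul_eq_mul_inv_cycleOf_mul (f : Perm α) (x : α) [DecidableRel f.SameCycle] :
    swap x (f x) * f = f * (f.cycleOf x)⁻¹ * (swap x (f x) * f.cycleOf x) := by
  set d := f * (f.cycleOf x)⁻¹
  have hd : ∀ y, f.SameCycle x y → d⁻¹ y = y := fun y hy =>
    inv_eq_iff_eq.2 (mul_inv_cycleOf_apply_of_sameCycle hy).symm
  calc swap x (f x) * f = swap x (f x) * d * f.cycleOf x := by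
        rw [mul_assoc, inv_mul_cancel_right]
    _ = d * swap (d⁻¹ x) (d⁻¹ (f x)) * f.cycleOf x := by rw [swap_mul_eq_mul_swap]
    _ = d * (swap x (f x) * f.cycleOf x) := by
        rw [hd x .rfl, hd (f x) (sameCycle_apply_right.2 .rfl), mul_assoc]

theorem disjoint_swap_swap_mul (hffx : f (f x) = x) :
    Disjoint (swap x (f x)) (swap x (f x) * f) := by
  intro y
  by_cases hy : y = x ∨ y = f x
  · right
    rcases hy with rfl | rfl <;> simp [mul_apply, hffx]
  · left
    push Not at hy
    exact swap_apply_of_ne_of_ne hy.1 hy.2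

variable [Fintype α]

theorem card_support_swap_mul_add_two (hx : f x ≠ x) (hffx : f (f x) = x) :
    #(swap x (f x) * f).support + 2 = #f.support := by
  conv_rhs => rw [← swap_mul_self_mul x (f x) f, (disjoint_swap_swap_mul hffx).card_support_mul,
    card_support_swap hx.symm]
  omega

theorem card_cycleType_swap_mul_add_one (hx : f x ≠ x) (hffx : f (f x) = x) :
    (swap x (f x) * f).cycleType.card + 1 = f.cycleType.card := by
  conv_rhs => rw [← swap_mul_self_mul x (f x) f, (disjoint_swap_swap_mul hffx).cycleType_mul,
    Multiset.card_add, card_cycleType_eq_one.2 (isCycle_swap hx.symm)]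
  omega

theorem card_support_swap_mul_add_one (hx : f x ≠ x) (hffx : f (f x) ≠ x) :
    #(swap x (f x) * f).support + 1 = #f.support := by
  rw [support_swap_mul_eq f x hffx, card_sdiff_of_subset (by simpa using hx), card_singleton]
  have : 1 ≤ #f.support := card_pos.2 ⟨x, mem_support.2 hx⟩
  omega

theorem card_cycleType_swap_mul (hx : f x ≠ x) (hffx : f (f x) ≠ x) :
    (swap x (f x) * f).cycleType.card = f.cycleType.card := by
  set c := f.cycleOf x
  set d := f * c⁻¹
  have hcx : c x = f x := cycleOf_apply_self f x
  have hccx : c (c x) = f (f x) := by rw [hcx, cycleOf_apply_apply_self]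
  have hc : c.IsCycle := isCycle_cycleOf f hx
  have he : (swap x (c x) * c).IsCycle := hc.swap_mul (hcx ▸ hx) (hccx ▸ hffx)
  have hdc : Disjoint d c := disjoint_mul_inv_of_mem_cycleFactorsFinset
    (cycleOf_mem_cycleFactorsFinset_iff.2 (mem_support.2 hx))
  have hde : Disjoint d (swap x (c x) * c) :=
    hdc.mono le_rfl (support_swap_mul_eq c x (hccx ▸ hffx) ▸ sdiff_subset)
  -- `f = d * c`, and the swap only shortens the cycle `c` to the cycle `swap x (c x) * c`
  conv_rhs => rw [← inv_mul_cancel_right f c]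
  rw [swap_mul_eq_mul_inv_cycleOf_mul, ← hcx, hde.cycleType_mul, hdc.cycleType_mul,
    Multiset.card_add, Multiset.card_add, card_cycleType_eq_one.2 he, card_cycleType_eq_one.2 hc]

end Equiv.Perm

open Equiv.Perm

theorem pexc_eq_card_support_add_c2 {n : ℕ} [NeZero n] (π : Perm (Fin n)) :
    pexc π = #π.support + c2 π - if π 0 = 0 then 0 else 2 := by
  have hsupp : c1 π + #π.support = n := by
    rw [c1, Perm.support, card_filter_add_card_filter_not, card_univ, Fintype.card_fin]
  have hfix : (∀ j : Fin n, (j : ℕ) = 0 → π j = j) ↔ π 0 = 0 :=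
    ⟨fun h => h 0 (Fin.val_zero n), fun h j hj => by rw [Fin.val_eq_zero_iff.1 hj, h]⟩
  rw [pexc, if_congr hfix rfl rfl]
  omega

theorem pexc_eq_pexc_mul_swap_add_one {n : ℕ} [NeZero n] {π : Perm (Fin n)} (h0 : π 0 ≠ 0) :
    pexc π = pexc (π * swap 0 (π 0)) + 1 := by
  set x := π 0
  have hx : π x ≠ x := fun h => h0 (π.injective h)
  have hg : π * swap 0 x = swap x (π x) * π := mul_swap_eq_swap_mul π 0 x
  have hg0 : (π * swap 0 x) 0 = π x := by rw [mul_apply, swap_apply_left]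
  rw [pexc_eq_card_support_add_c2, pexc_eq_card_support_add_c2, hg0, if_neg h0, c2, c2, hg]
  by_cases hπx : π x = 0
  · have hffx : π (π x) = x := by rw [hπx]
    have := card_support_swap_mul_add_two hx hffx
    have := card_cycleType_swap_mul_add_one hx hffx
    rw [if_pos hπx]
    omega
  · have hffx : π (π x) ≠ x := fun h => hπx (π.injective h)
    have := card_support_swap_mul_add_one hx hffx
    have := card_cycleType_swap_mul hx hffx
    have : 2 ≤ #(swap x (π x) * π).support :=
      two_le_card_support_of_ne_one fun h1 => hπx (by rw [← hg0, hg, h1, one_apply])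
    rw [if_neg hπx]
    omega

section RemoveFix

variable {m : ℕ} {i : Fin (m + 1)}

theorem extendDomain_removeFix {σ : Perm (Fin (m + 1))} (hσ : σ i = i) :
    (removeFix i σ).extendDomain (finSuccAboveEquiv i) = σ := by
  refine Equiv.ext fun x => ?_
  by_cases hx : x = i
  · rw [hx, extendDomain_apply_not_subtype _ _ (by simp), hσ]
  · rw [extendDomain_apply_subtype (b := x) _ _ hx]
    simp [removeFix, permCongr_apply, hσ]

theorem removeFix_extendDomain (τ : Perm (Fin m)) :
    removeFix i (τ.extendDomain (finSuccAboveEquiv i)) = τ :=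
  extendDomainHom_injective (finSuccAboveEquiv i) <|
    extendDomain_removeFix (extendDomain_apply_not_subtype _ _ (by simp))

theorem pexc_extendDomain_finSuccAboveEquiv (hi : i ≠ 0) (τ : Perm (Fin m)) :
    pexc (τ.extendDomain (finSuccAboveEquiv i)) = pexc τ := by
  have : NeZero m := ⟨by have := Fin.val_ne_zero_iff.2 hi; omega⟩
  have h0 : ((finSuccAboveEquiv i 0 : {x // x ≠ i}) : Fin (m + 1)) = 0 :=
    Fin.succAbove_ne_zero_zero hi
  have hfix : τ.extendDomain (finSuccAboveEquiv i) 0 = 0 ↔ τ 0 = 0 := by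
    rw [← h0, extendDomain_apply_image, Subtype.coe_inj, (finSuccAboveEquiv i).apply_eq_iff_eq]
  rw [pexc_eq_card_support_add_c2, pexc_eq_card_support_add_c2, if_congr hfix rfl rfl, c2, c2,
    card_support_extend_domain, cycleType_extendDomain]

theorem removeFix_injOn : Set.InjOn (removeFix i) {σ | σ i = i} := fun σ₁ h₁ σ₂ h₂ h => by
  rw [← extendDomain_removeFix h₁, ← extendDomain_removeFix h₂, h]

theorem mul_swap_apply_eq_self {π : Perm (Fin (m + 1))} (hπ : π 0 = i) :
    (π * swap 0 i) i = i := by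
  rw [mul_apply, swap_apply_right, hπ]

theorem pexc_eq_pexc_removeFix_add_one (hi : i ≠ 0) {π : Perm (Fin (m + 1))} (hπ : π 0 = i) :
    pexc π = pexc (removeFix i (π * swap 0 i)) + 1 := by
  rw [← pexc_extendDomain_finSuccAboveEquiv hi, extendDomain_removeFix (mul_swap_apply_eq_self hπ),
    ← hπ]
  exact pexc_eq_pexc_mul_swap_add_one (hπ ▸ hi)

end RemoveFix

theorem stmt18 (m k : ℕ) (hk : 1 ≤ k) (i : Fin (m + 1)) (hi : i ≠ 0) :
    Set.BijOn (fun π : Equiv.Perm (Fin (m + 1)) =>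
        removeFix i (π * Equiv.swap 0 i))
      {π : Equiv.Perm (Fin (m + 1)) | pexc π = k ∧ π 0 = i}
      {τ : Equiv.Perm (Fin m) | pexc τ = k - 1} := by
  refine ⟨?_, ?_, ?_⟩
  · rintro π ⟨hπk, hπ⟩
    show pexc (removeFix i (π * swap 0 i)) = k - 1
    have := pexc_eq_pexc_removeFix_add_one hi hπ
    omega
  · rintro π₁ ⟨-, h₁⟩ π₂ ⟨-, h₂⟩ h
    exact mul_right_cancel <|
      removeFix_injOn (mul_swap_apply_eq_self h₁) (mul_swap_apply_eq_self h₂) h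
  · rintro τ (hτ : pexc τ = k - 1)
    set σ := τ.extendDomain (finSuccAboveEquiv i)
    have hσi : σ i = i := extendDomain_apply_not_subtype _ _ (by simp)
    have hπ : (σ * swap 0 i) 0 = i := by rw [mul_apply, swap_apply_left, hσi]
    have hτπ : removeFix i (σ * swap 0 i * swap 0 i) = τ := by
      rw [mul_swap_mul_self, removeFix_extendDomain]
    refine ⟨σ * swap 0 i, ⟨?_, hπ⟩, hτπ⟩
    have := pexc_eq_pexc_removeFix_add_one hi hπ
    rw [hτπ] at this
    omega
end
end
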